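/- arXiv:1210.6083 — 2 statements merged into one kernel-verified Lean document; each statement's English description precedes it below -/
import Mathlib

section
/- The density h₁ = v·u_x + (1/2)u²·v + (1/3)v² is a conserved density for the system u_t = F₁ = u_xxx + 3u·u_xx + 3u_x² + 3u²·u_x + v_xx + u_x·v + u·v_x, v_t = F₂ = v_xxx − 3u·v_xx + 3v·u_xx + 6u·u_x·v + 3u²·v_x + 4v·v_x; that is, D_t h₁ := (∂h₁/∂u)·F₁ + (∂h₁/∂u_x)·D_x F₁ + (∂h₁/∂v)·F₂ lies in the image of the total derivative D_x. -/
open MvPolynomial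

/-- The differential polynomial ring ℝ[u, u_x, u_xx, …, v, v_x, …]:
variable `X (0, n)` is `u_{nx}`, `X (1, n)` is `v_{nx}`. -/
abbrev DPoly : Type := MvPolynomial (Fin 2 × ℕ) ℝ

/-- The total derivative operator D_x, acting by D_x(u_{nx}) = u_{(n+1)x}. -/
noncomputable def Dx : Derivation ℝ DPoly DPoly :=
  MvPolynomial.mkDerivation ℝ (fun p => X (p.1, p.2 + 1))

/-- `U n` is `u_{nx}`. -/
noncomputable def U (n : ℕ) : DPoly := X ((0 : Fin 2), n)
/-- `V n` is `v_{nx}`. -/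
noncomputable def V (n : ℕ) : DPoly := X ((1 : Fin 2), n)

/-- `Dxn n` is the n-th power of the total derivative. -/
noncomputable def Dxn (n : ℕ) : DPoly →ₗ[ℝ] DPoly := Dx.toLinearMap ^ n

/-- The evolutionary (time) derivative attached to the flow (u_t, v_t) = (F₁, F₂):
D_t h = Σₙ (∂h/∂u_{nx})·D_x^n(F₁) + Σₙ (∂h/∂v_{nx})·D_x^n(F₂). -/
noncomputable def Dt (F₁ F₂ : DPoly) : Derivation ℝ DPoly DPoly :=
  MvPolynomial.mkDerivation ℝ (fun p => Dxn p.2 (if p.1 = 0 then F₁ else F₂))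

/-- Euler (variational) derivative: E_i(h) = Σₙ (−D_x)^n (∂h/∂X(i,n)). -/
noncomputable def Eul (i : Fin 2) (h : DPoly) : DPoly :=
  ∑ᶠ n : ℕ, ((-1 : ℝ) ^ n) • Dxn n (pderiv (i, n) h)

/-- The substitution homomorphism `v = 0`: sends every `v_{nx}` to 0 and fixes `u_{nx}`. -/
noncomputable def subV0 : DPoly →ₐ[ℝ] DPoly :=
  aeval (fun p : Fin 2 × ℕ => if p.1 = 0 then X p else 0)

lemma Dderiv_ofNat (D : Derivation ℝ DPoly DPoly) (n : ℕ) [n.AtLeastTwo] :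
    D (no_index (OfNat.ofNat n) : DPoly) = 0 := by
  exact D.map_natCast n

set_option maxHeartbeats 2000000 in
set_option synthInstance.maxHeartbeats 1000000 in
/-- h₁ = v·u_x + (1/2)u²v + (1/3)v² is a conserved density for the
new system: D_t h₁ lies in the image of D_x. -/
theorem stmt5 :
    ∃ P : DPoly,
      Dx P = Dt (U 3 + 3*U 0*U 2 + 3*U 1^2 + 3*U 0^2*U 1 + V 2 + U 1*V 0 + U 0*V 1) (V 3 - 3*U 0*V 2 + 3*V 0*U 2 + 6*U 0*U 1*V 0 + 3*U 0^2*V 1 + 4*V 0*V 1) (V 0*U 1 + (1/2 : ℝ) • (U 0^2*V 0) + (1/3 : ℝ) • (V 0^2)) := by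
  refine ⟨((-5/6 : ℝ) • (V 1^2) + (5/3 : ℝ) • (V 0*V 2) + (8/9 : ℝ) • (V 0^3)
      + U 3*V 0 - U 2*V 1 + U 1*V 2 + 3*U 1*V 0^2 + 4*U 1^2*V 0
      + 4*U 0*U 2*V 0 - 4*U 0*U 1*V 1 + (1/2 : ℝ) • (U 0^2*V 2)
      + (5/2 : ℝ) • (U 0^2*V 0^2) + (15/2 : ℝ) • (U 0^2*U 1*V 0)
      - (3/2 : ℝ) • (U 0^3*V 1) + (3/2 : ℝ) • (U 0^4*V 0)), ?_⟩
  have hDx : ∀ p : Fin 2 × ℕ, Dx (X p) = X (p.1, p.2 + 1) := fun p =>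
    MvPolynomial.mkDerivation_X _ _ p
  have hDt : ∀ p : Fin 2 × ℕ,
      (Dt (U 3 + 3*U 0*U 2 + 3*U 1^2 + 3*U 0^2*U 1 + V 2 + U 1*V 0 + U 0*V 1)
        (V 3 - 3*U 0*V 2 + 3*V 0*U 2 + 6*U 0*U 1*V 0 + 3*U 0^2*V 1 + 4*V 0*V 1)) (X p)
      = Dxn p.2 (if p.1 = 0 then
          (U 3 + 3*U 0*U 2 + 3*U 1^2 + 3*U 0^2*U 1 + V 2 + U 1*V 0 + U 0*V 1) else
          (V 3 - 3*U 0*V 2 + 3*V 0*U 2 + 6*U 0*U 1*V 0 + 3*U 0^2*V 1 + 4*V 0*V 1)) := fun p =>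
    MvPolynomial.mkDerivation_X _ _ p
  simp only [U, V] at hDt
  simp only [U, V, map_add, map_sub, Derivation.map_smul, Derivation.leibniz,
    Derivation.leibniz_pow, hDx, hDt, Dxn, pow_zero, pow_one, Module.End.one_apply,
    Dderiv_ofNat, smul_eq_mul,
    if_true, if_false, Fin.isValue, reduceIte, map_smul]
  simp only [if_neg (show ¬((1 : Fin 2) = 0) by decide), map_add, map_sub,
    Derivation.coeFn_coe, Derivation.leibniz, Derivation.leibniz_pow, hDx, smul_eq_mul,
    Dderiv_ofNat, Derivation.map_smul]
  apply smul_right_injective DPoly (show (18:ℝ) ≠ 0 by norm_num)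
  simp only [smul_add, smul_sub, smul_smul]
  norm_num
  simp only [smul_eq_C_mul, map_ofNat]
  ring
end

section
/- The density h₂ = −2u_xx·v_x + v·u_x² − 6u·u_x·v_x + 3v²·u_x + 8u²·v·u_x − (4/3)v_x² + u⁴·v + 2u²·v² + (7/9)v³ is a conserved density for the system u_t = F₁ = u_xxx + 3u·u_xx + 3u_x² + 3u²·u_x + v_xx + u_x·v + u·v_x, v_t = F₂ = v_xxx − 3u·v_xx + 3v·u_xx + 6u·u_x·v + 3u²·v_x + 4v·v_x, i.e. D_t h₂ is a total x-derivative. -/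
open MvPolynomial

/-!
`D_t h₂` is a total derivative with an explicit polynomial flux. Expanding `D_t` by its chain rule
and `D_x` by the Leibniz rule turns `D_x(flux) = D_t h₂` into an identity between polynomials in
finitely many jet variables, which is a ring normalisation. Working with `9 h₂` and `9 · flux`
clears all denominators, so that normalisation needs no division in `DPoly`.
-/

theorem Derivation.map_ofNat {R A M : Type*} [CommSemiring R] [CommSemiring A] [AddCommMonoid M]
    [Algebra R A] [Module A M] [Module R M] (D : Derivation R A M) (n : ℕ) [n.AtLeastTwo] :
    D (no_index (OfNat.ofNat n) : A) = 0 :=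
  D.map_natCast n

lemma Dx_U (n : ℕ) : Dx (U n) = U (n + 1) := mkDerivation_X ℝ _ _

lemma Dx_V (n : ℕ) : Dx (V n) = V (n + 1) := mkDerivation_X ℝ _ _

lemma Dxn_zero (p : DPoly) : Dxn 0 p = p := rfl

lemma Dxn_succ (n : ℕ) (p : DPoly) : Dxn (n + 1) p = Dx (Dxn n p) := by
  rw [Dxn, pow_succ', Module.End.mul_apply]
  rfl

lemma Dt_U (f₁ f₂ : DPoly) (n : ℕ) : Dt f₁ f₂ (U n) = Dxn n f₁ := mkDerivation_X ℝ _ _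

lemma Dt_V (f₁ f₂ : DPoly) (n : ℕ) : Dt f₁ f₂ (V n) = Dxn n f₂ := mkDerivation_X ℝ _ _

noncomputable def F₁ : DPoly :=
  U 3 + 3*U 0*U 2 + 3*U 1^2 + 3*U 0^2*U 1 + V 2 + U 1*V 0 + U 0*V 1

noncomputable def F₂ : DPoly :=
  V 3 - 3*U 0*V 2 + 3*V 0*U 2 + 6*U 0*U 1*V 0 + 3*U 0^2*V 1 + 4*V 0*V 1

noncomputable def h₂ : DPoly :=
  -(2:ℝ) • (U 2*V 1) + V 0*U 1^2 - (6:ℝ) • (U 0*U 1*V 1) + 3*V 0^2*U 1 + 8*U 0^2*V 0*U 1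
    - (4/3 : ℝ) • (V 1^2) + U 0^4*V 0 + 2*U 0^2*V 0^2 + (7/9 : ℝ) • (V 0^3)

lemma nine_smul_h₂ : (9:ℝ) • h₂ = -(18*(U 2*V 1)) + 9*(V 0*U 1^2) - 54*(U 0*U 1*V 1)
    + 27*(V 0^2*U 1) + 72*(U 0^2*V 0*U 1) - 12*(V 1^2) + 9*(U 0^4*V 0) + 18*(U 0^2*V 0^2)
    + 7*(V 0^3) := by
  simp only [h₂, smul_add, smul_sub, smul_smul]
  norm_num
  simp only [ofNat_smul_eq_nsmul (R := ℝ), nsmul_eq_mul, Nat.cast_ofNat]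
  ring

noncomputable def flux9 : DPoly :=
  -108*(U 0*U 1*U 2*V 0) - 432*(U 0*U 1*V 0*V 1) - 54*(U 0*U 1*V 3) - 333*(U 0*U 1^2*V 1)
    + 117*(U 0*U 2*V 0^2) + 108*(U 0*U 2*V 2) - 108*(U 0*U 3*V 1) + 369*(U 0^2*U 1*V 0^2)
    + 234*(U 0^2*U 1*V 2) + 135*(U 0^2*U 1^2*V 0) - 288*(U 0^2*U 2*V 1) + 72*(U 0^2*U 3*V 0)
    + 108*(U 0^2*V 0*V 2) + 81*(U 0^2*V 0^3) - 117*(U 0^2*V 1^2) - 414*(U 0^3*U 1*V 1)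
    + 252*(U 0^3*U 2*V 0) + 351*(U 0^4*U 1*V 0) + 90*(U 0^4*V 0^2) + 9*(U 0^4*V 2) - 27*(U 0^5*V 1)
    + 27*(U 0^6*V 0) - 180*(U 1*U 2*V 1) + 18*(U 1*U 3*V 0) + 72*(U 1*V 0*V 2) + 90*(U 1*V 0^3)
    - 54*(U 1*V 1^2) + 153*(U 1^2*V 0^2) + 63*(U 1^2*V 2) + 63*(U 1^3*V 0) - 144*(U 2*V 0*V 1)
    - 18*(U 2*V 3) - 36*(U 2^2*V 0) + 27*(U 3*V 0^2) + 18*(U 3*V 2) - 18*(U 4*V 1) - 96*(V 0*V 1^2)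
    + 48*(V 0^2*V 2) + 21*(V 0^4) - 42*(V 1*V 3) + 21*(V 2^2)

lemma Dx_flux9 : Dx flux9 = Dt F₁ F₂ ((9:ℝ) • h₂) := by
  rw [nine_smul_h₂]
  simp only [flux9, F₁, F₂, Derivation.map_add, Derivation.map_sub, Derivation.map_neg,
    Derivation.leibniz, Derivation.leibniz_pow, Derivation.map_ofNat, Derivation.map_natCast,
    Dt_U, Dt_V, Dxn_succ, Dxn_zero, Dx_U, Dx_V, smul_eq_mul, nsmul_eq_mul,
    neg_zero, mul_zero, add_zero, zero_add]
  ring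

/-- h₂ is a conserved density for the new system: D_t h₂ ∈ Im D_x. -/
theorem stmt6 :
    ∃ P : DPoly,
      Dx P = Dt (U 3 + 3*U 0*U 2 + 3*U 1^2 + 3*U 0^2*U 1 + V 2 + U 1*V 0 + U 0*V 1) (V 3 - 3*U 0*V 2 + 3*V 0*U 2 + 6*U 0*U 1*V 0 + 3*U 0^2*V 1 + 4*V 0*V 1) (-(2:ℝ) • (U 2*V 1) + V 0*U 1^2 - (6:ℝ) • (U 0*U 1*V 1) + 3*V 0^2*U 1 + 8*U 0^2*V 0*U 1 - (4/3 : ℝ) • (V 1^2) + U 0^4*V 0 + 2*U 0^2*V 0^2 + (7/9 : ℝ) • (V 0^3)) :=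
by
  refine ⟨(9:ℝ)⁻¹ • flux9, ?_⟩
  change _ = Dt F₁ F₂ h₂
  rw [Derivation.map_smul, Dx_flux9, Derivation.map_smul, smul_smul,
    inv_mul_cancel₀ (by norm_num), one_smul]
end
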